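/- Let σ be an infinite sequence over {L,R}, let δ < 1/4 be a positive real, and let M be a positive integer. Suppose liminf_{T→∞} dens(σ^T) ≤ 1/2 − δ. Let ℓ_1, ℓ_2, … be positive integers such that for all i ≥ M, ℓ_i ∈ [(1−δ)(2^{i+1}−1), (1+δ)(2^{i+1}−1)]. Then there exists a sequence k_2, k_3, … such that for infinitely many i > M: ℓ_{i−1} + δ·2^{i−2} ≤ k_i ≤ ℓ_i and dens(σ_{{ℓ_{i−1}+1,…,k_i}}) ≤ 1/2 − δ/4. -/

import Mathlib

noncomputable section

namespace Paper

/-- The two actions of each player in the Big Match. -/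
inductive Act
  | L
  | R
deriving DecidableEq

/-- The density of the action `L` among the rounds `a+1, …, b` of the sequence
`σ` (rounds are 0-indexed, so these are the entries `σ a, …, σ (b-1)`). -/
def densBetween (σ : ℕ → Act) (a b : ℕ) : ℝ :=
  (((Finset.Ico a b).filter fun t => σ t = Act.L).card : ℝ) / ((b : ℝ) - a)

/-- The density of the action `L` in the first `T` terms of `σ`. -/
def dens (σ : ℕ → Act) (T : ℕ) : ℝ := densBetween σ 0 T

/-!
Write `c(t)` for the number of `L`s among the first `t` rounds and, with `α = 1/2 - δ/4`,
consider the slack `S(t) = α t - c(t)`. A block of rounds `a+1, …, b` has density above `α`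
exactly when `S(b) < S(a)`. If from some index `N` on no admissible cut `k_i` exists, then in
particular the full blocks `ℓ_j+1, …, ℓ_{j+1}` all have density above `α` (consecutive lengths
are at least `δ 2^{j-1}` apart), so `S(ℓ_j)` decreases from `j = N` on and stays below
`S(ℓ_N) ≤ ℓ_N / 2`. On the other hand the liminf hypothesis gives arbitrarily large `T` with
`c(T) < (1/2 - 7δ/8) T`, i.e. `S(T) > 5δT/8`; for `ℓ_j < T ≤ ℓ_{j+1}` this forces
`S(ℓ_j) > 3δT/8`, either because `T` itself would be an admissible cut or because `T` lies within
`δ 2^{j-1}` of `ℓ_j`. For `T` large this contradicts `S(ℓ_j) ≤ ℓ_N / 2`.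
-/

def countL (σ : ℕ → Act) (a b : ℕ) : ℕ :=
  ((Finset.Ico a b).filter fun t => σ t = Act.L).card

lemma countL_add (σ : ℕ → Act) {a b c : ℕ} (hab : a ≤ b) (hbc : b ≤ c) :
    countL σ a b + countL σ b c = countL σ a c := by
  rw [countL, countL, countL, ← Finset.Ico_union_Ico_eq_Ico hab hbc, Finset.filter_union,
    Finset.card_union_of_disjoint
      (Finset.disjoint_filter_filter (Finset.Ico_disjoint_Ico_consecutive a b c))]

lemma countL_zero_monotone (σ : ℕ → Act) : Monotone (countL σ 0) := fun b _ hbc =>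
  countL_add σ (Nat.zero_le b) hbc ▸ Nat.le_add_right _ _

def slack (σ : ℕ → Act) (α : ℝ) (t : ℕ) : ℝ := α * t - countL σ 0 t

lemma dens_le_one (σ : ℕ → Act) (T : ℕ) : dens σ T ≤ 1 := by
  rw [dens, densBetween, Nat.cast_zero, sub_zero]
  exact div_le_one_of_le₀ (by exact_mod_cast (Finset.card_filter_le _ _).trans (by simp))
    (Nat.cast_nonneg _)

lemma slack_eq_sub_dens_mul (σ : ℕ → Act) (α : ℝ) (T : ℕ) : slack σ α T = (α - dens σ T) * T := by
  rcases Nat.eq_zero_or_pos T with rfl | hT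
  · simp [slack, countL]
  · have hT : (T : ℝ) ≠ 0 := by positivity
    simp only [slack, dens, densBetween, Nat.cast_zero, sub_zero]
    rw [sub_mul, div_mul_cancel₀ _ hT, countL]

lemma slack_lt_of_lt_densBetween (σ : ℕ → Act) {α : ℝ} {a b : ℕ} (hab : a < b)
    (h : α < densBetween σ a b) : slack σ α b < slack σ α a := by
  have hba : (0 : ℝ) < b - a := sub_pos.2 (Nat.cast_lt.2 hab)
  rw [densBetween, lt_div_iff₀ hba] at h
  have hsplit : (countL σ 0 a : ℝ) + countL σ a b = countL σ 0 b := by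
    exact_mod_cast countL_add σ (Nat.zero_le a) hab.le
  simp only [slack, countL] at hsplit ⊢
  linarith

def LengthsNearDyadic (δ : ℝ) (M : ℕ) (ℓ : ℕ → ℕ) : Prop :=
  ∀ i, M ≤ i → (1 - δ) * ((2 : ℝ) ^ (i + 1) - 1) ≤ (ℓ i : ℝ) ∧
    (ℓ i : ℝ) ≤ (1 + δ) * ((2 : ℝ) ^ (i + 1) - 1)

/-- `m` is an admissible value of `k i`. -/
def GoodCut (σ : ℕ → Act) (δ : ℝ) (ℓ : ℕ → ℕ) (i m : ℕ) : Prop :=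
  (ℓ (i - 1) : ℝ) + δ * 2 ^ (i - 2) ≤ m ∧ m ≤ ℓ i ∧ densBetween σ (ℓ (i - 1)) m ≤ 1 / 2 - δ / 4

namespace LengthsNearDyadic

variable {δ : ℝ} {M : ℕ} {ℓ : ℕ → ℕ}

lemma add_le_succ (hℓ : LengthsNearDyadic δ M ℓ) (hδ4 : δ < 1 / 4) {j : ℕ} (hMj : M ≤ j)
    (hj : 1 ≤ j) : (ℓ j : ℝ) + δ * 2 ^ (j - 1) ≤ ℓ (j + 1) := by
  have hup := (hℓ j hMj).2
  have hlow := (hℓ (j + 1) (hMj.trans j.le_succ)).1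
  have hp : (1 : ℝ) ≤ 2 ^ (j - 1) := one_le_pow₀ (by norm_num)
  rw [show j + 1 = j - 1 + 2 by omega, pow_add] at hup
  rw [show j + 1 + 1 = j - 1 + 3 by omega, pow_add] at hlow
  nlinarith

lemma strictMono_shift (hℓ : LengthsNearDyadic δ M ℓ) (hδ0 : 0 < δ) (hδ4 : δ < 1 / 4)
    {N : ℕ} (hMN : M ≤ N) (hN : 1 ≤ N) : StrictMono fun n => ℓ (N + n) := by
  refine strictMono_nat_of_lt_succ fun n => ?_
  have := hℓ.add_le_succ hδ4 (j := N + n) (by omega) (by omega)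
  have : (0 : ℝ) < δ * 2 ^ (N + n - 1) := by positivity
  exact_mod_cast (by linarith : (ℓ (N + n) : ℝ) < ℓ (N + n + 1))

end LengthsNearDyadic

section

variable {σ : ℕ → Act} {δ : ℝ} {M : ℕ} {ℓ : ℕ → ℕ}

lemma slack_lt_of_not_goodCut (hδ0 : 0 < δ) {j m : ℕ} (hm : (ℓ j : ℝ) + δ * 2 ^ (j - 1) ≤ m)
    (hmℓ : m ≤ ℓ (j + 1)) (hno : ¬ GoodCut σ δ ℓ (j + 1) m) :
    slack σ (1 / 2 - δ / 4) m < slack σ (1 / 2 - δ / 4) (ℓ j) := by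
  have hlt : ℓ j < m := by
    have : (0 : ℝ) < δ * 2 ^ (j - 1) := by positivity
    exact_mod_cast (by linarith : (ℓ j : ℝ) < m)
  refine slack_lt_of_lt_densBetween σ hlt (lt_of_not_ge fun h => hno ?_)
  rw [GoodCut, Nat.add_sub_cancel, show j + 1 - 2 = j - 1 by omega]
  exact ⟨hm, hmℓ, h⟩

lemma slack_le_of_forall_not_goodCut (hℓ : LengthsNearDyadic δ M ℓ) (hδ0 : 0 < δ)
    (hδ4 : δ < 1 / 4) {N : ℕ} (hMN : M ≤ N) (hN : 1 ≤ N)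
    (hno : ∀ i, N < i → ∀ m, ¬ GoodCut σ δ ℓ i m) {j : ℕ} (hj : N ≤ j) :
    slack σ (1 / 2 - δ / 4) (ℓ j) ≤ slack σ (1 / 2 - δ / 4) (ℓ N) := by
  have hanti : Antitone fun n => slack σ (1 / 2 - δ / 4) (ℓ (N + n)) :=
    antitone_nat_of_succ_le fun n => (slack_lt_of_not_goodCut (j := N + n) hδ0
      (hℓ.add_le_succ hδ4 (by omega) (by omega)) le_rfl (hno (N + n + 1) (by omega) _)).le
  obtain ⟨n, rfl⟩ := Nat.exists_eq_add_of_le hj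
  exact hanti (Nat.zero_le n)

lemma lt_slack_of_lt_of_le_succ (hℓ : LengthsNearDyadic δ M ℓ) (hδ0 : 0 < δ)
    (hδ4 : δ < 1 / 4) {j T : ℕ} (hMj : M ≤ j) (hj : 1 ≤ j) (hjT : ℓ j < T)
    (hTj : T ≤ ℓ (j + 1))
    (hT : dens σ T < 1 / 2 - 7 * δ / 8) (hno : ∀ m, ¬ GoodCut σ δ ℓ (j + 1) m) :
    3 * δ / 8 * T < slack σ (1 / 2 - δ / 4) (ℓ j) := by
  have hT0 : (0 : ℝ) < T := by exact_mod_cast (Nat.zero_le _).trans_lt hjT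
  have hST : 5 * δ / 8 * T < slack σ (1 / 2 - δ / 4) T := by
    rw [slack_eq_sub_dens_mul]; nlinarith
  rcases le_or_gt ((ℓ j : ℝ) + δ * 2 ^ (j - 1)) T with hcut | hcut
  · have := slack_lt_of_not_goodCut hδ0 hcut hTj (hno T)
    nlinarith
  · have hc : (countL σ 0 (ℓ j) : ℝ) ≤ countL σ 0 T := by
      exact_mod_cast countL_zero_monotone σ hjT.le
    have hjT' : (ℓ j : ℝ) < T := by exact_mod_cast hjT
    have hlow := (hℓ j hMj).1
    have hp : (1 : ℝ) ≤ 2 ^ (j - 1) := one_le_pow₀ (by norm_num)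
    rw [show j + 1 = j - 1 + 2 by omega, pow_add] at hlow
    simp only [slack] at hST ⊢
    nlinarith

lemma exists_goodCut_gt (hδ0 : 0 < δ) (hδ4 : δ < 1 / 4)
    (hliminf : Filter.liminf (fun T => dens σ T) Filter.atTop ≤ 1 / 2 - δ)
    (hℓ : LengthsNearDyadic δ M ℓ) {N : ℕ} (hMN : M ≤ N) (hN : 1 ≤ N) :
    ∃ i, N < i ∧ ∃ m, GoodCut σ δ ℓ i m := by
  by_contra! hno
  obtain ⟨T, hT_large, hT⟩ : ∃ T, max (ℓ N + 1) ⌈4 * ℓ N / (3 * δ)⌉₊ ≤ T ∧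
      dens σ T < 1 / 2 - 7 * δ / 8 :=
    Filter.frequently_atTop.mp (Filter.frequently_lt_of_liminf_lt
      (Filter.isCoboundedUnder_ge_of_le _ (dens_le_one σ)) (by linarith)) _
  obtain ⟨n, hn_lt, hn_le⟩ := Nat.exists_not_and_succ_of_not_zero_of_exists
    (p := fun n => T ≤ ℓ (N + n)) (by simp only [add_zero]; omega)
    ⟨T, (hℓ.strictMono_shift hδ0 hδ4 hMN hN).le_apply⟩
  have hlower := lt_slack_of_lt_of_le_succ hℓ hδ0 hδ4 (j := N + n) (by omega) (by omega)
    (not_le.mp hn_lt) hn_le hT (hno _ (by omega))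
  have hupper := slack_le_of_forall_not_goodCut hℓ hδ0 hδ4 hMN hN hno (j := N + n) (by omega)
  have hN_small : 4 * (ℓ N : ℝ) ≤ 3 * δ * T := by
    rw [← div_le_iff₀' (by positivity)]
    exact (Nat.le_ceil _).trans (by exact_mod_cast le_of_max_le_right hT_large)
  have hslackN : slack σ (1 / 2 - δ / 4) (ℓ N) ≤ ℓ N / 2 := by
    have : (0 : ℝ) ≤ countL σ 0 (ℓ N) := Nat.cast_nonneg _
    simp only [slack]; nlinarith
  linarith

end

theorem stmt12_general (σ : ℕ → Act) (δ : ℝ) (hδ0 : 0 < δ) (hδ4 : δ < 1 / 4)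
    (M : ℕ)
    (hliminf : Filter.liminf (fun T => dens σ T) Filter.atTop ≤ 1 / 2 - δ)
    (ℓ : ℕ → ℕ)
    (hℓ : ∀ i, M ≤ i →
      (1 - δ) * ((2 : ℝ) ^ (i + 1) - 1) ≤ (ℓ i : ℝ) ∧
        (ℓ i : ℝ) ≤ (1 + δ) * ((2 : ℝ) ^ (i + 1) - 1)) :
    ∃ k : ℕ → ℕ,
      {i : ℕ | M < i ∧ (ℓ (i - 1) : ℝ) + δ * 2 ^ (i - 2) ≤ (k i : ℝ) ∧
        k i ≤ ℓ i ∧ densBetween σ (ℓ (i - 1)) (k i) ≤ 1 / 2 - δ / 4}.Infinite := by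
  classical
  have hinf : {i | M < i ∧ ∃ m, GoodCut σ δ ℓ i m}.Infinite :=
    Set.infinite_of_forall_exists_gt fun a =>
      let ⟨i, hi, hcut⟩ := exists_goodCut_gt hδ0 hδ4 hliminf hℓ (N := max a M + 1)
        (by omega) (by omega)
      ⟨i, ⟨by omega, hcut⟩, by omega⟩
  refine ⟨fun i => if h : ∃ m, GoodCut σ δ ℓ i m then h.choose else 0, hinf.mono ?_⟩
  rintro i ⟨hMi, hcut⟩
  simp only [Set.mem_ofPred_eq, dif_pos hcut]
  exact ⟨hMi, hcut.choose_spec⟩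

/-- Let `σ` be an infinite sequence over `{L,R}`, let
`0 < δ < 1/4` and let `M` be a positive integer.  Suppose
`liminf_{T→∞} dens(σ^T) ≤ 1/2 - δ`, and let `ℓ i` be positive integers with
`ℓ i ∈ [(1-δ)(2^{i+1}-1), (1+δ)(2^{i+1}-1)]` for all `i ≥ M`.  Then there is a
sequence `k` such that for infinitely many `i > M`:
`ℓ (i-1) + δ 2^{i-2} ≤ k i ≤ ℓ i` and
`dens(σ over the rounds ℓ(i-1)+1, …, k i) ≤ 1/2 - δ/4`. -/
theorem stmt12 (σ : ℕ → Act) (δ : ℝ) (hδ0 : 0 < δ) (hδ4 : δ < 1 / 4)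
    (M : ℕ) (hM : 0 < M)
    (hliminf : Filter.liminf (fun T => dens σ T) Filter.atTop ≤ 1 / 2 - δ)
    (ℓ : ℕ → ℕ) (hℓ_pos : ∀ i, 0 < ℓ i)
    (hℓ : ∀ i, M ≤ i →
      (1 - δ) * ((2 : ℝ) ^ (i + 1) - 1) ≤ (ℓ i : ℝ) ∧
        (ℓ i : ℝ) ≤ (1 + δ) * ((2 : ℝ) ^ (i + 1) - 1)) :
    ∃ k : ℕ → ℕ,
      {i : ℕ | M < i ∧ (ℓ (i - 1) : ℝ) + δ * 2 ^ (i - 2) ≤ (k i : ℝ) ∧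
        k i ≤ ℓ i ∧ densBetween σ (ℓ (i - 1)) (k i) ≤ 1 / 2 - δ / 4}.Infinite :=
  stmt12_general σ δ hδ0 hδ4 M hliminf ℓ hℓ

end Paper
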